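/- Let G₁ = (S₁, L₁, H₁) and G₂ = (S₂, L₂, H₂) be n-channel open quantum systems, and set G̃₂ = G₁⁻¹ ◁ G₂ ◁ G₁ where G₁⁻¹ = (S₁†, −S₁†L₁, −H₁) (this triple product is unambiguous by associativity of the series product). Then: (a) G₂ ◁ G₁ = G₁ ◁ G̃₂, and (b) G̃₂ = ( S₁†S₂S₁, S₁†(S₂ − I)L₁ + S₁†L₂, H₂ + Im{ L₂†(S₂ + I)L₁ − L₁†S₂L₁ } ), componentwise as triples. -/

import Mathlib

noncomputable section

open Finset

variable {E : Type*} [NormedAddCommGroup E] [InnerProductSpace ℂ E] [CompleteSpace E]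

/-- `Im{A} = (A - A*)/(2i)`. -/
def imOp (A : E →L[ℂ] E) : E →L[ℂ] E := (2 * Complex.I)⁻¹ • (A - star A)

/-- An open quantum system `(S, L, H)` with field channels indexed by `ι`: an `ι×ι` matrix
`S` of bounded operators, an `ι`-vector `L` of bounded operators, and an operator `H`. -/
structure QOpen (ι : Type*) (E : Type*) [NormedAddCommGroup E] [InnerProductSpace ℂ E]
    [CompleteSpace E] where
  S : Matrix ι ι (E →L[ℂ] E)
  L : ι → E →L[ℂ] E
  H : E →L[ℂ] E

/-- The scattering matrix of `G` is unitary: `S†S = SS† = I`. -/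
def QOpen.unitaryS {ι : Type*} [Fintype ι] [DecidableEq ι] (G : QOpen ι E) : Prop :=
  G.S.conjTranspose * G.S = 1 ∧ G.S * G.S.conjTranspose = 1

/-- The series product `G₂ ◁ G₁ = (S₂S₁, L₂ + S₂L₁, H₁ + H₂ + Im{L₂†S₂L₁})`. -/
def series {ι : Type*} [Fintype ι] (G₂ G₁ : QOpen ι E) : QOpen ι E where
  S := G₂.S * G₁.S
  L := fun j => G₂.L j + ∑ k, G₂.S j k * G₁.L k
  H := G₁.H + G₂.H + imOp (∑ j, ∑ k, star (G₂.L j) * G₂.S j k * G₁.L k)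

/-- The inverse system `G⁻¹ = (S†, −S†L, −H)`. -/
def QOpen.inv {ι : Type*} [Fintype ι] (G : QOpen ι E) : QOpen ι E where
  S := G.S.conjTranspose
  L := fun j => -(∑ k, star (G.S k j) * G.L k)
  H := -G.H

/-! Part (a) is pure algebra of the series product: it is associative as soon as the outer
factor has `S†S = I`, `G₁ ◁ G₁⁻¹` is the trivial system `(I, 0, 0)` because `SS† = I` and
`Im{L†L} = 0`, and `(I, 0, 0)` is a left unit. Part (b) is a direct expansion, simplified by
`S₁S₁† = I` and `Im{A*} = -Im{A}`. -/

open Matrix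

section StarMatrix

variable {ι R : Type*} [Fintype ι] [Semiring R] [StarRing R]

lemma sum_star_mul_apply (S : Matrix ι ι R) (L : ι → R) (j : ι) :
    ∑ k, star (S k j) * L k = (Sᴴ *ᵥ L) j := by
  simp [mulVec, dotProduct, conjTranspose_apply]

lemma sum_sum_star_mul_mul (L L' : ι → R) (S : Matrix ι ι R) :
    ∑ j, ∑ k, star (L j) * S j k * L' k = star L ⬝ᵥ S *ᵥ L' := by
  simp [dotProduct, mulVec, Finset.mul_sum, mul_assoc]

lemma sum_sum_star_mul_mul_apply (S T : Matrix ι ι R) (L : ι → R) (j : ι) :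
    ∑ k, ∑ l, star (S k j) * T k l * L l = ((Sᴴ * T) *ᵥ L) j := by
  rw [← mulVec_mulVec]
  simp [mulVec, dotProduct, Finset.mul_sum, mul_assoc, conjTranspose_apply]

lemma star_mulVec_dotProduct_mulVec (A : Matrix ι ι R) (v w : ι → R) :
    star (A *ᵥ v) ⬝ᵥ A *ᵥ w = star v ⬝ᵥ (Aᴴ * A) *ᵥ w := by
  rw [star_mulVec, ← dotProduct_mulVec, mulVec_mulVec]

end StarMatrix

section ImOp

lemma imOp_add (A B : E →L[ℂ] E) : imOp (A + B) = imOp A + imOp B := by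
  simp only [imOp, star_add, add_sub_add_comm, smul_add]

lemma imOp_neg (A : E →L[ℂ] E) : imOp (-A) = -imOp A := by
  simp only [imOp, star_neg, neg_sub_neg, ← neg_sub A, smul_neg]

lemma imOp_sub (A B : E →L[ℂ] E) : imOp (A - B) = imOp A - imOp B := by
  rw [sub_eq_add_neg, imOp_add, imOp_neg, sub_eq_add_neg]

lemma imOp_star (A : E →L[ℂ] E) : imOp (star A) = -imOp A := by
  simp only [imOp, star_star, ← neg_sub A, smul_neg]

lemma imOp_of_isSelfAdjoint {A : E →L[ℂ] E} (hA : IsSelfAdjoint A) : imOp A = 0 := by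
  simp only [imOp, hA.star_eq, sub_self, smul_zero]

end ImOp

namespace QOpen

variable {ι : Type*}

lemma ext {G G' : QOpen ι E} (hS : G.S = G'.S) (hL : G.L = G'.L) (hH : G.H = G'.H) :
    G = G' := by
  cases G; cases G'; cases hS; cases hL; cases hH; rfl

def one [DecidableEq ι] : QOpen ι E := ⟨1, 0, 0⟩

variable [Fintype ι]

lemma inv_S (G : QOpen ι E) : G.inv.S = G.Sᴴ := rfl

lemma inv_L (G : QOpen ι E) : G.inv.L = -(G.Sᴴ *ᵥ G.L) := by
  ext1 j
  simp only [QOpen.inv, sum_star_mul_apply, Pi.neg_apply]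

lemma inv_H (G : QOpen ι E) : G.inv.H = -G.H := rfl

end QOpen

section SeriesProduct

variable {ι : Type*} [Fintype ι]

lemma series_S (G₂ G₁ : QOpen ι E) : (series G₂ G₁).S = G₂.S * G₁.S := rfl

lemma series_L (G₂ G₁ : QOpen ι E) : (series G₂ G₁).L = G₂.L + G₂.S *ᵥ G₁.L := rfl

lemma series_H (G₂ G₁ : QOpen ι E) :
    (series G₂ G₁).H = G₁.H + G₂.H + imOp (star G₂.L ⬝ᵥ G₂.S *ᵥ G₁.L) := by
  rw [← sum_sum_star_mul_mul]; rfl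

lemma series_assoc [DecidableEq ι] {G₃ : QOpen ι E} (h₃ : G₃.Sᴴ * G₃.S = 1) (G₂ G₁ : QOpen ι E) :
    series G₃ (series G₂ G₁) = series (series G₃ G₂) G₁ := by
  refine QOpen.ext (Matrix.mul_assoc _ _ _).symm ?_ ?_
  · simp only [series_L, series_S, mulVec_add, mulVec_mulVec, add_assoc]
  · have hcancel : star (G₃.S *ᵥ G₂.L) ⬝ᵥ (G₃.S * G₂.S) *ᵥ G₁.L = star G₂.L ⬝ᵥ G₂.S *ᵥ G₁.L := by
      rw [← mulVec_mulVec, star_mulVec_dotProduct_mulVec, h₃, one_mulVec]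
    simp only [series_H, series_L, series_S, star_add, add_dotProduct, mulVec_add, dotProduct_add,
      mulVec_mulVec, hcancel, imOp_add]
    abel

lemma one_series [DecidableEq ι] (G : QOpen ι E) : series QOpen.one G = G := by
  refine QOpen.ext (Matrix.one_mul _) ?_ ?_
  · simp [series_L, QOpen.one]
  · simp [series_H, QOpen.one, imOp]

lemma series_inv_self [DecidableEq ι] {G : QOpen ι E} (hG : G.S * G.Sᴴ = 1) :
    series G G.inv = QOpen.one := by
  have hL : G.S *ᵥ G.inv.L = -G.L := by
    rw [QOpen.inv_L, mulVec_neg, mulVec_mulVec, hG, one_mulVec]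
  refine QOpen.ext hG ?_ ?_
  · simp [series_L, hL, QOpen.one]
  · rw [series_H, hL, dotProduct_neg, imOp_neg,
      imOp_of_isSelfAdjoint (star_dotProduct G.L G.L).symm, QOpen.inv_H]
    simp [QOpen.one]

lemma series_series_inv [DecidableEq ι] {G₁ : QOpen ι E} (h₁ : G₁.S * G₁.Sᴴ = 1)
    (G₂ : QOpen ι E) :
    series (series G₁.inv G₂) G₁ =
      ⟨G₁.Sᴴ * G₂.S * G₁.S, (G₁.Sᴴ * (G₂.S - 1)) *ᵥ G₁.L + G₁.Sᴴ *ᵥ G₂.L,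
        G₂.H + imOp (star G₂.L ⬝ᵥ (G₂.S + 1) *ᵥ G₁.L - star G₁.L ⬝ᵥ G₂.S *ᵥ G₁.L)⟩ := by
  have hinv : G₁.Sᴴᴴ * G₁.Sᴴ = 1 := by rw [conjTranspose_conjTranspose, h₁]
  refine QOpen.ext rfl ?_ ?_
  · simp only [series_L, series_S, QOpen.inv_L, QOpen.inv_S, Matrix.mul_sub, Matrix.mul_one,
      sub_mulVec]
    abel
  · simp only [series_H, series_L, series_S, QOpen.inv_L, QOpen.inv_S, QOpen.inv_H,
      ← mulVec_mulVec, star_add, star_neg, add_dotProduct, neg_dotProduct,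
      star_mulVec_dotProduct_mulVec, hinv, one_mulVec, add_mulVec, dotProduct_add, imOp_add,
      imOp_neg, imOp_sub]
    rw [star_dotProduct G₂.L G₁.L, imOp_star]
    abel

end SeriesProduct

theorem stmt_5_general {ι : Type*} [Fintype ι] [DecidableEq ι]
    (G₁ G₂ : QOpen ι E)
    (hS₁ : G₁.unitaryS) :
    series G₂ G₁ = series G₁ (series (series G₁.inv G₂) G₁)
      ∧ series (series G₁.inv G₂) G₁
        = QOpen.mk (G₁.S.conjTranspose * G₂.S * G₁.S)
            (fun j =>
              (∑ k, ∑ l, star (G₁.S k j) * (G₂.S - 1) k l * G₁.L l)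
                + ∑ k, star (G₁.S k j) * G₂.L k)
            (G₂.H + imOp ((∑ j, ∑ k, star (G₂.L j) * (G₂.S + 1) j k * G₁.L k)
                - ∑ j, ∑ k, star (G₁.L j) * G₂.S j k * G₁.L k)) := by
  obtain ⟨hS₁_left, hS₁_right⟩ := hS₁
  constructor
  · rw [series_assoc hS₁_left, series_assoc hS₁_left, series_inv_self hS₁_right, one_series]
  · rw [series_series_inv hS₁_right]
    -- separate passes: `sum_sum_star_mul_mul` would also match the double sum in the `L` part
    simp only [sum_sum_star_mul_mul_apply, sum_star_mul_apply]
    simp only [sum_sum_star_mul_mul]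
    rfl

/-- with `G̃₂ = G₁⁻¹ ◁ G₂ ◁ G₁` one has
(a) `G₂ ◁ G₁ = G₁ ◁ G̃₂`, and
(b) `G̃₂ = (S₁†S₂S₁, S₁†(S₂ − I)L₁ + S₁†L₂, H₂ + Im{L₂†(S₂ + I)L₁ − L₁†S₂L₁})`,
componentwise as triples. -/
theorem stmt_5 {ι : Type*} [Fintype ι] [DecidableEq ι]
    (G₁ G₂ : QOpen ι E)
    (hS₁ : G₁.unitaryS) (hS₂ : G₂.unitaryS)
    (hH₁ : IsSelfAdjoint G₁.H) (hH₂ : IsSelfAdjoint G₂.H) :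
    series G₂ G₁ = series G₁ (series (series G₁.inv G₂) G₁)
      ∧ series (series G₁.inv G₂) G₁
        = QOpen.mk (G₁.S.conjTranspose * G₂.S * G₁.S)
            (fun j =>
              (∑ k, ∑ l, star (G₁.S k j) * (G₂.S - 1) k l * G₁.L l)
                + ∑ k, star (G₁.S k j) * G₂.L k)
            (G₂.H + imOp ((∑ j, ∑ k, star (G₂.L j) * (G₂.S + 1) j k * G₁.L k)
                - ∑ j, ∑ k, star (G₁.L j) * G₂.S j k * G₁.L k)) :=
  stmt_5_general G₁ G₂ hS₁
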